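/- arXiv:2307.11822 — 2 statements merged into one kernel-verified Lean document; each statement's English description precedes it below -/
import Mathlib

section
/- Let A be an m×n real matrix (with n ≥ 2) such that S^+(Ax) ≤ S^-(x) for every nonzero vector x ∈ ℝ^n. Then all entries of A are nonzero and have the same sign. -/
open Matrix Filter

/-- Number of sign changes in a list of reals (consecutive pairs with negative product). -/
noncomputable def signChanges (l : List ℝ) : ℕ :=
  (l.zip l.tail).countP (fun p => decide (p.1 * p.2 < 0))

/-- `S^-(v)`: sign changes of the coordinates of `v` after discarding zero entries. -/
noncomputable def Sm {n : ℕ} (v : Fin n → ℝ) : ℕ :=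
  signChanges ((List.ofFn v).filter (fun x => decide (x ≠ 0)))

/-- `S^+(v)`: maximal number of sign changes over all ±1 completions of the zero
entries of `v`, with the convention `S^+(0) = n`. -/
noncomputable def Sp {n : ℕ} (v : Fin n → ℝ) : ℕ :=
  if v = 0 then n
  else Finset.univ.sup (fun σ : Fin n → Bool =>
    signChanges (List.ofFn (fun i => if v i = 0 then (if σ i then (1:ℝ) else -1) else v i)))

/-- First nonzero entry of a vector (`0` if the vector is zero). -/
noncomputable def firstNz {n : ℕ} (v : Fin n → ℝ) : ℝ :=
  ((List.ofFn v).filter (fun x => decide (x ≠ 0))).headI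

/-- `A` is strictly sign regular with sign pattern `ε`:
every `r × r` minor (`1 ≤ r ≤ min m n`) is nonzero with sign `ε r`. -/
def ssrPattern {m n : ℕ} (A : Matrix (Fin m) (Fin n) ℝ) (ε : ℕ → ℝ) : Prop :=
  ∀ r : ℕ, 1 ≤ r → r ≤ min m n → ∀ (f : Fin r → Fin m) (g : Fin r → Fin n),
    StrictMono f → StrictMono g → 0 < ε r * (A.submatrix f g).det

/-- `A` is sign regular with sign pattern `ε`:
every nonzero `r × r` minor (`1 ≤ r ≤ min m n`) has sign `ε r`. -/
def srPattern {m n : ℕ} (A : Matrix (Fin m) (Fin n) ℝ) (ε : ℕ → ℝ) : Prop :=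
  ∀ r : ℕ, 1 ≤ r → r ≤ min m n → ∀ (f : Fin r → Fin m) (g : Fin r → Fin n),
    StrictMono f → StrictMono g → 0 ≤ ε r * (A.submatrix f g).det

/-- The map `f` picks out consecutive indices. -/
def Contig {r m : ℕ} (f : Fin r → Fin m) : Prop :=
  ∃ a : ℕ, ∀ i : Fin r, (f i : ℕ) = a + (i : ℕ)

/-!
For `x ≥ 0`, `x ≠ 0` we have `S⁻(x) = 0`, so the hypothesis forces `S⁺(Ax) = 0`, i.e. `Ax` has all
coordinates nonzero and of one sign. Unit vectors show that each column of `A` is strictly of one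
sign; and if row `i` had entries `A i j > 0 > A i j'`, then `x = -A i j' • e_j + A i j • e_j'`
would be nonnegative with `(Ax)_i = 0`.
-/

lemma mul_pos_of_mul_pos_of_mul_pos {R : Type*} [CommRing R] [LinearOrder R] [IsStrictOrderedRing R]
    {a b c : R} (hab : 0 < a * b) (hbc : 0 < b * c) : 0 < a * c := by
  have : 0 < b * b * (a * c) :=
    calc 0 < a * b * (b * c) := mul_pos hab hbc
      _ = b * b * (a * c) := by ring
  exact pos_of_mul_pos_right this (mul_self_nonneg b)

lemma signChanges_cons_cons (x y : ℝ) (t : List ℝ) :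
    signChanges (x :: y :: t) = (if x * y < 0 then 1 else 0) + signChanges (y :: t) := by
  simp only [signChanges, List.zip_cons_cons, List.tail_cons, List.countP_cons]
  grind

lemma signChanges_eq_zero_of_nonneg {l : List ℝ} (h : ∀ a ∈ l, 0 ≤ a) : signChanges l = 0 := by
  refine List.countP_eq_zero.mpr fun p hp => ?_
  obtain ⟨h₁, h₂⟩ := List.of_mem_zip hp
  have := mul_nonneg (h _ h₁) (h _ (List.mem_of_mem_tail h₂))
  simpa using this

lemma mul_head_pos_of_signChanges_eq_zero {x : ℝ} {t : List ℝ} (h0 : 0 ∉ x :: t)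
    (h : signChanges (x :: t) = 0) {b : ℝ} (hb : b ∈ x :: t) : 0 < x * b := by
  induction t generalizing x with
  | nil =>
    obtain rfl := List.mem_singleton.mp hb
    exact mul_self_pos.mpr fun hx => h0 (by simp [hx])
  | cons y t ih =>
    rw [signChanges_cons_cons, Nat.add_eq_zero_iff, ite_eq_right_iff] at h
    have hxy : 0 < x * y := lt_of_le_of_ne (not_lt.mp fun h' => one_ne_zero (h.1 h'))
      (Ne.symm (mul_ne_zero (fun hx => h0 (by simp [hx])) fun hy => h0 (by simp [hy])))
    rcases List.mem_cons.mp hb with rfl | hb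
    · exact mul_self_pos.mpr (left_ne_zero_of_mul hxy.ne')
    · exact mul_pos_of_mul_pos_of_mul_pos hxy
        (ih (fun h' => h0 (List.mem_cons_of_mem _ h')) h.2 hb)

lemma mul_pos_of_signChanges_eq_zero {l : List ℝ} (h0 : 0 ∉ l) (h : signChanges l = 0)
    {a b : ℝ} (ha : a ∈ l) (hb : b ∈ l) : 0 < a * b := by
  cases l with
  | nil => simp at ha
  | cons x t =>
    have hxa := mul_head_pos_of_signChanges_eq_zero h0 h ha
    have hxb := mul_head_pos_of_signChanges_eq_zero h0 h hb
    rw [mul_comm] at hxa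
    exact mul_pos_of_mul_pos_of_mul_pos hxa hxb

lemma Sm_eq_zero_of_nonneg {n : ℕ} {v : Fin n → ℝ} (h : 0 ≤ v) : Sm v = 0 :=
  signChanges_eq_zero_of_nonneg fun a ha => by
    obtain ⟨i, rfl⟩ := List.mem_ofFn.mp (List.mem_of_mem_filter ha)
    exact h i

lemma signChanges_le_Sp {m : ℕ} {v : Fin m → ℝ} (hv : v ≠ 0) (σ : Fin m → Bool) :
    signChanges (List.ofFn fun i => if v i = 0 then (if σ i then (1 : ℝ) else -1) else v i) ≤
      Sp v := by
  rw [Sp, if_neg hv]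
  exact Finset.le_sup (f := fun σ : Fin m → Bool => signChanges (List.ofFn fun i =>
    if v i = 0 then (if σ i then (1 : ℝ) else -1) else v i)) (Finset.mem_univ σ)

lemma strictSign_of_Sp_eq_zero {m : ℕ} {v : Fin m → ℝ} (h : Sp v = 0) :
    (∀ i, 0 < v i) ∨ ∀ i, v i < 0 := by
  by_contra hsign
  by_cases hv : v = 0
  · subst hv
    rw [Sp, if_pos rfl] at h
    subst h
    exact hsign (Or.inl finZeroElim)
  obtain ⟨p, hp⟩ := Function.ne_iff.mp hv
  rw [Pi.zero_apply] at hp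
  -- Fill the zeros of `v` with the sign opposite to that of the nonzero entry `v p`.
  set w : Fin m → ℝ := fun i => if v i = 0 then (if decide (v p < 0) then 1 else -1) else v i
  have hw : ∀ i, v i * v p ≤ 0 → w i * v p < 0 := by
    intro i hi
    by_cases hvi : v i = 0
    · rcases hp.lt_or_gt with hp' | hp' <;> simp [w, hvi, hp', hp'.not_gt]
    · simpa [w, hvi] using lt_of_le_of_ne hi (mul_ne_zero hvi hp)
  obtain ⟨i, hi⟩ : ∃ i, v i * v p ≤ 0 := by
    push Not at hsign
    rcases hp.lt_or_gt with hp' | hp'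
    · obtain ⟨i, hi⟩ := hsign.2
      exact ⟨i, mul_nonpos_of_nonneg_of_nonpos hi hp'.le⟩
    · obtain ⟨i, hi⟩ := hsign.1
      exact ⟨i, mul_nonpos_of_nonpos_of_nonneg hi hp'.le⟩
  have hw0 : 0 ∉ List.ofFn w := fun h0 => by
    obtain ⟨k, hk⟩ := List.mem_ofFn.mp h0
    by_cases hvk : v k = 0
    · simp only [w, hvk, if_true] at hk
      split at hk <;> norm_num at hk
    · simp [w, hvk] at hk
  have hsc : signChanges (List.ofFn w) = 0 :=
    Nat.eq_zero_of_le_zero (h ▸ signChanges_le_Sp hv fun _ => decide (v p < 0))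
  have hwp : w p = v p := by simp [w, hp]
  have := mul_pos_of_signChanges_eq_zero hw0 hsc (List.mem_ofFn.mpr ⟨i, rfl⟩)
    (List.mem_ofFn.mpr ⟨p, rfl⟩)
  rw [hwp] at this
  exact (hw i hi).not_gt this

theorem Matrix.strictSign_of_strictSign_mulVec {ι κ R : Type*} [Fintype κ] [DecidableEq κ]
    [CommRing R] [LinearOrder R] [IsStrictOrderedRing R] (A : Matrix ι κ R)
    (h : ∀ x : κ → R, x ≠ 0 → 0 ≤ x → (∀ i, 0 < (A *ᵥ x) i) ∨ ∀ i, (A *ᵥ x) i < 0) :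
    (∀ i j, 0 < A i j) ∨ ∀ i j, A i j < 0 := by
  have hcol : ∀ j, (∀ i, 0 < A i j) ∨ ∀ i, A i j < 0 := fun j => by
    simpa [mulVec_single_one] using
      h (Pi.single j 1) (by simp) (Pi.single_nonneg.mpr zero_le_one)
  have hrow : ∀ i j j', 0 < A i j → A i j' < 0 → False := by
    intro i j j' hpos hneg
    have hjj' : j ≠ j' := by rintro rfl; exact hpos.not_gt hneg
    set x : κ → R := Pi.single j (-A i j') + Pi.single j' (A i j)
    have hx : x ≠ 0 := fun hx => by
      simpa [x, hjj', hneg.ne] using congrFun hx j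
    have hx0 : 0 ≤ x := add_nonneg (Pi.single_nonneg.mpr (by linarith))
      (Pi.single_nonneg.mpr hpos.le)
    have hAx : (A *ᵥ x) i = 0 := by
      simp only [x, mulVec_add, mulVec_single, Pi.add_apply, Pi.smul_apply, col_apply,
        op_smul_eq_mul]
      ring
    rcases h x hx hx0 with h' | h'
    · exact (h' i).ne' hAx
    · exact (h' i).ne hAx
  by_contra hA
  push Not at hA
  obtain ⟨⟨i, j, hij⟩, i', j', hij'⟩ := hA
  have hj : ∀ k, A k j < 0 := (hcol j).resolve_left fun hp => (hp i).not_ge hij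
  have hj' : ∀ k, 0 < A k j' := (hcol j').resolve_right fun hn => (hn i').not_ge hij'
  exact hrow i j' j (hj' i) (hj i)

theorem stmt1_general {m n : ℕ} (A : Matrix (Fin m) (Fin n) ℝ)
    (hVD : ∀ x : Fin n → ℝ, x ≠ 0 → Sp (A *ᵥ x) ≤ Sm x) :
    (∀ i j, 0 < A i j) ∨ (∀ i j, A i j < 0) :=
  A.strictSign_of_strictSign_mulVec fun x hx hx0 =>
    strictSign_of_Sp_eq_zero (Nat.eq_zero_of_le_zero (Sm_eq_zero_of_nonneg hx0 ▸ hVD x hx))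

theorem stmt1 {m n : ℕ} (hn : 2 ≤ n) (A : Matrix (Fin m) (Fin n) ℝ)
    (hVD : ∀ x : Fin n → ℝ, x ≠ 0 → Sp (A *ᵥ x) ≤ Sm x) :
    (∀ i j, 0 < A i j) ∨ (∀ i j, A i j < 0) :=
  stmt1_general A hVD
end

section
/- Let A be an n×n matrix that is SSR_{n−1} (all minors of order at most n−1 are nonzero with a common sign per order), let v = (α_1, −α_2, …, (−1)^{n−1} α_n)^T with all α_j ≥ 0, v ≠ 0, and x := adj(A)·v. If S^+(Ax) ≤ S^-(x), then det(A) ≠ 0. -/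
open Matrix Filter

theorem signChanges_le_length_sub_one (l : List ℝ) : signChanges l ≤ l.length - 1 :=
  calc signChanges l ≤ (l.zip l.tail).length := List.countP_le_length
    _ = l.length - 1 := by rw [List.length_zip, List.length_tail]; omega

theorem Sm_le_sub_one {n : ℕ} (v : Fin n → ℝ) : Sm v ≤ n - 1 :=
  calc Sm v ≤ ((List.ofFn v).filter (fun x => decide (x ≠ 0))).length - 1 :=
        signChanges_le_length_sub_one _
    _ ≤ (List.ofFn v).length - 1 := Nat.sub_le_sub_right (List.length_filter_le _ _) 1
    _ = n - 1 := by rw [List.length_ofFn]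

theorem Sp_zero {n : ℕ} : Sp (0 : Fin n → ℝ) = n := if_pos rfl

/-- `A x = det A • v`, so `det A = 0` would give `S⁺(A x) = S⁺(0) = n`, above the bound
`S⁻(x) ≤ n - 1` unless `n = 0`, where `det A = 1` anyway. -/
theorem stmt9_general {n : ℕ} (A : Matrix (Fin n) (Fin n) ℝ)
    (v : Fin n → ℝ)
    (x : Fin n → ℝ) (hx : x = A.adjugate *ᵥ v)
    (hVD : Sp (A *ᵥ x) ≤ Sm x) :
    A.det ≠ 0 := by
  intro hdet
  have hAx : A *ᵥ x = 0 := by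
    rw [hx, ← cramer_eq_adjugate_mulVec, mulVec_cramer, hdet, zero_smul]
  rw [hAx, Sp_zero] at hVD
  obtain rfl : n = 0 := by have := Sm_le_sub_one x; omega
  simp at hdet

theorem stmt9 {n : ℕ} (hn : 1 ≤ n) (A : Matrix (Fin n) (Fin n) ℝ) (ε : ℕ → ℝ)
    (hsv : ∀ p, ε p = 1 ∨ ε p = -1)
    (hA : ∀ p : ℕ, 1 ≤ p → p ≤ n - 1 → ∀ (f g : Fin p → Fin n),
      StrictMono f → StrictMono g → 0 < ε p * (A.submatrix f g).det)
    (α : Fin n → ℝ) (hα : ∀ j, 0 ≤ α j)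
    (v : Fin n → ℝ) (hv : ∀ j, v j = (-1 : ℝ) ^ (j : ℕ) * α j) (hv0 : v ≠ 0)
    (x : Fin n → ℝ) (hx : x = A.adjugate *ᵥ v)
    (hVD : Sp (A *ᵥ x) ≤ Sm x) :
    A.det ≠ 0 :=
  stmt9_general A v x hx hVD
end
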